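/- Let A_1, ..., A_N ∈ ℝ^{n×n}, let i ≥ 1, and let 𝒫_i ∈ ℝ^{ñ_i×ñ_i} be symmetric with 𝒫_i Ãⁱ(A_j) + Ãⁱ(A_j)ᵀ 𝒫_i ≼ 0 for all j = 1, ..., N. Let A : [0,∞) → ℝ^{n×n} take values in the convex hull of {A_1, ..., A_N} and let x : [0,∞) → ℝⁿ be differentiable with x'(t) = A(t) x(t). Then the non-homogeneous polynomial function t ↦ ξ̃_i(x(t))ᵀ 𝒫_i ξ̃_i(x(t)) is nonincreasing on [0,∞); in particular, for every initial condition x(0) = x_0, the set 𝒳_i = {x ∈ ℝⁿ : ξ̃_i(x)ᵀ 𝒫_i ξ̃_i(x) ≤ ξ̃_i(x_0)ᵀ 𝒫_i ξ̃_i(x_0)} contains x(t) for all t ≥ 0. -/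

import Mathlib

open Matrix

noncomputable section

/-- `M ≼ 0` for a (symmetric) matrix: `ξᵀ M ξ ≤ 0` for all `ξ`. -/
def NegSemidef {m : Type*} [Fintype m] (M : Matrix m m ℝ) : Prop :=
  ∀ x : m → ℝ, x ⬝ᵥ M *ᵥ x ≤ 0

/-- Index type for Kronecker powers: `kronIdx n k` indexes the `(k+1)`-st Kronecker power
of an `n`-dimensional object. -/
def kronIdx (n : ℕ) : ℕ → Type
  | 0 => Fin n
  | k+1 => Fin n × kronIdx n k

instance kronIdxFintype (n : ℕ) : ∀ k, Fintype (kronIdx n k)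
  | 0 => inferInstanceAs (Fintype (Fin n))
  | k+1 => @instFintypeProd _ _ _ (kronIdxFintype n k)

instance kronIdxDecEq (n : ℕ) : ∀ k, DecidableEq (kronIdx n k)
  | 0 => inferInstanceAs (DecidableEq (Fin n))
  | k+1 => @instDecidableEqProd _ _ _ (kronIdxDecEq n k)

/-- `matKronPow M k = ⊗^{k+1} M`, the `(k+1)`-st Kronecker power of the matrix `M`
(so `matKronPow M 0 = ⊗¹M = M`). -/
def matKronPow {n : ℕ} (M : Matrix (Fin n) (Fin n) ℝ) : ∀ k, Matrix (kronIdx n k) (kronIdx n k) ℝ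
  | 0 => M
  | k+1 => Matrix.kroneckerMap (· * ·) M (matKronPow M k)

/-- Kronecker product of two vectors. -/
def vecKron {α β : Type*} (u : α → ℝ) (v : β → ℝ) : α × β → ℝ := fun p => u p.1 * v p.2

/-- `vecKronPow x k = ⊗^{k+1} x`, the `(k+1)`-st Kronecker power of the vector `x`. -/
def vecKronPow {n : ℕ} (x : Fin n → ℝ) : ∀ k, kronIdx n k → ℝ
  | 0 => x
  | k+1 => vecKron x (vecKronPow x k)

/-- The lifted matrices: `liftA A k = 𝒜^{k+1}(A)`, with `𝒜¹(A) = A` and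
`𝒜^{k+1}(A) = Iₙ ⊗ 𝒜^k(A) + A ⊗ I_{n^k}`. -/
def liftA {n : ℕ} (A : Matrix (Fin n) (Fin n) ℝ) : ∀ k, Matrix (kronIdx n k) (kronIdx n k) ℝ
  | 0 => A
  | k+1 => Matrix.kroneckerMap (· * ·) (1 : Matrix (Fin n) (Fin n) ℝ) (liftA A k)
      + Matrix.kroneckerMap (· * ·) A (1 : Matrix (kronIdx n k) (kronIdx n k) ℝ)

/-- Index type of the stacked hierarchy system of degree `i`: blocks `k = 0, …, i-1`
corresponding to Kronecker powers `1, …, i`; its cardinality is `ñ_i = n + n² + ⋯ + nⁱ`. -/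
abbrev tildeIdx (n i : ℕ) : Type := Σ k : Fin i, kronIdx n k

/-- `Ãⁱ(A) = diag(𝒜¹(A), 𝒜²(A), …, 𝒜ⁱ(A))`. -/
def tildeA {n : ℕ} (A : Matrix (Fin n) (Fin n) ℝ) (i : ℕ) :
    Matrix (tildeIdx n i) (tildeIdx n i) ℝ :=
  Matrix.blockDiagonal' (fun k : Fin i => liftA A k)

/-- `diag(P, ⊗²P, …, ⊗ⁱP)`. -/
def tildeKronPow {n : ℕ} (P : Matrix (Fin n) (Fin n) ℝ) (i : ℕ) :
    Matrix (tildeIdx n i) (tildeIdx n i) ℝ :=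
  Matrix.blockDiagonal' (fun k : Fin i => matKronPow P k)

/-- `ξ̃_i(x) = (x, ⊗²x, …, ⊗ⁱx)`, the stacked vector of Kronecker powers of `x`. -/
def tildeXi {n : ℕ} (i : ℕ) (x : Fin n → ℝ) : tildeIdx n i → ℝ :=
  fun p => vecKronPow x p.1 p.2

/-!
Along a solution, the product rule for Kronecker powers gives `d/dt ⊗ᵏx = 𝒜ᵏ(A(t)) ⊗ᵏx`, hence
`ξ̃' = Ãⁱ(A(t)) ξ̃` and `d/dt ξ̃ᵀ P ξ̃ = ξ̃ᵀ (P Ãⁱ(A(t)) + Ãⁱ(A(t))ᵀ P) ξ̃`. The matrix in the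
middle depends linearly on `A(t)` (because `A ↦ 𝒜ᵏ(A)` is linear) and negative semidefiniteness is
a convex condition, so it is `≼ 0` on the whole convex hull of the `Aⱼ`. A function with
nonpositive derivative on `[0, ∞)` is nonincreasing there.
-/

open Kronecker

lemma convex_setOf_negSemidef {m : Type*} [Fintype m] :
    Convex ℝ {M : Matrix m m ℝ | NegSemidef M} := by
  intro M hM M' hM' a b ha hb _ x
  simp only [Matrix.add_mulVec, Matrix.smul_mulVec, dotProduct_add, dotProduct_smul, smul_eq_mul]
  nlinarith [hM x, hM' x]

lemma liftA_succ {n : ℕ} (A : Matrix (Fin n) (Fin n) ℝ) (k : ℕ) :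
    (liftA A (k + 1) : Matrix (Fin n × kronIdx n k) (Fin n × kronIdx n k) ℝ) =
      1 ⊗ₖ liftA A k + A ⊗ₖ 1 := rfl

lemma liftA_add {n : ℕ} (A B : Matrix (Fin n) (Fin n) ℝ) (k : ℕ) :
    liftA (A + B) k = liftA A k + liftA B k := by
  induction k with
  | zero => rfl
  | succ k ih =>
    rw [liftA_succ, ih, kronecker_add, add_kronecker, liftA_succ, liftA_succ]
    abel

lemma liftA_smul {n : ℕ} (c : ℝ) (A : Matrix (Fin n) (Fin n) ℝ) (k : ℕ) :
    liftA (c • A) k = c • liftA A k := by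
  induction k with
  | zero => rfl
  | succ k ih =>
    rw [liftA_succ, ih, kronecker_smul, smul_kronecker]
    exact (smul_add c _ _).symm

lemma tildeA_add {n : ℕ} (A B : Matrix (Fin n) (Fin n) ℝ) (i : ℕ) :
    tildeA (A + B) i = tildeA A i + tildeA B i := by
  simp only [tildeA, liftA_add]
  exact blockDiagonal'_add _ _

lemma tildeA_smul {n : ℕ} (c : ℝ) (A : Matrix (Fin n) (Fin n) ℝ) (i : ℕ) :
    tildeA (c • A) i = c • tildeA A i := by
  simp only [tildeA, liftA_smul]
  exact blockDiagonal'_smul c _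

def lyapunovMap {n : ℕ} (i : ℕ) (P : Matrix (tildeIdx n i) (tildeIdx n i) ℝ) :
    Matrix (Fin n) (Fin n) ℝ →ₗ[ℝ] Matrix (tildeIdx n i) (tildeIdx n i) ℝ where
  toFun A := P * tildeA A i + (tildeA A i)ᵀ * P
  map_add' A B := by
    simp only [tildeA_add, transpose_add, Matrix.mul_add, Matrix.add_mul]
    abel
  map_smul' c A := by
    simp only [tildeA_smul, transpose_smul, Matrix.mul_smul, Matrix.smul_mul, RingHom.id_apply,
      smul_add]

lemma negSemidef_lyapunovMap_of_mem_convexHull {n N : ℕ} {i : ℕ}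
    {P : Matrix (tildeIdx n i) (tildeIdx n i) ℝ} {As : Fin N → Matrix (Fin n) (Fin n) ℝ}
    (hAs : ∀ j, NegSemidef (lyapunovMap i P (As j)))
    {B : Matrix (Fin n) (Fin n) ℝ} (hB : B ∈ convexHull ℝ (Set.range As)) :
    NegSemidef (lyapunovMap i P B) :=
  convexHull_min (Set.range_subset_iff.2 hAs)
    (convex_setOf_negSemidef.linear_preimage (lyapunovMap i P)) hB

lemma kroneckerMap_mulVec_vecKron {m₁ m₂ : Type*} [Fintype m₁] [Fintype m₂]
    (M : Matrix m₁ m₁ ℝ) (M' : Matrix m₂ m₂ ℝ) (u : m₁ → ℝ) (v : m₂ → ℝ) :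
    M ⊗ₖ M' *ᵥ vecKron u v = vecKron (M *ᵥ u) (M' *ᵥ v) := by
  ext ⟨a, b⟩
  simp only [mulVec, dotProduct, vecKron, kroneckerMap_apply, Fintype.sum_prod_type,
    Finset.sum_mul_sum]
  exact Finset.sum_congr rfl fun c _ => Finset.sum_congr rfl fun d _ => by ring

lemma blockDiagonal'_mulVec_apply {R ι : Type*} [NonUnitalNonAssocSemiring R] [DecidableEq ι]
    [Fintype ι] {m : ι → Type*} [∀ k, Fintype (m k)] [∀ k, DecidableEq (m k)]
    (M : ∀ k, Matrix (m k) (m k) R) (v : (Σ k, m k) → R) (k : ι) (q : m k) :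
    (blockDiagonal' M *ᵥ v) ⟨k, q⟩ = (M k *ᵥ fun r => v ⟨k, r⟩) q := by
  simp only [mulVec, dotProduct, ← Finset.univ_sigma_univ, Finset.sum_sigma]
  rw [Finset.sum_eq_single k]
  · simp only [blockDiagonal'_apply_eq]
  · intro k' _ hk'
    exact Finset.sum_eq_zero fun r _ => by rw [blockDiagonal'_apply_ne _ _ _ hk'.symm, zero_mul]
  · exact fun h => absurd (Finset.mem_univ k) h

lemma HasDerivAt.vecKron {α β : Type*} [Fintype α] [Fintype β] {u : ℝ → α → ℝ} {u' : α → ℝ} {v : ℝ → β → ℝ}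
    {v' : β → ℝ} {t : ℝ} (hu : HasDerivAt u u' t) (hv : HasDerivAt v v' t) :
    HasDerivAt (fun s => vecKron (u s) (v s)) (vecKron u' (v t) + vecKron (u t) v') t := by
  rw [hasDerivAt_pi]
  rintro ⟨a, b⟩
  exact (hasDerivAt_pi.1 hu a).mul (hasDerivAt_pi.1 hv b)

lemma HasDerivAt.vecKronPow {n : ℕ} {x : ℝ → Fin n → ℝ} {B : Matrix (Fin n) (Fin n) ℝ} {t : ℝ}
    (hx : HasDerivAt x (B *ᵥ x t) t) (k : ℕ) :
    HasDerivAt (fun s => vecKronPow (x s) k) (liftA B k *ᵥ vecKronPow (x t) k) t := by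
  induction k with
  | zero => exact hx
  | succ k ih =>
    refine (hx.vecKron ih).congr_deriv ?_
    change _ = (1 ⊗ₖ liftA B k + B ⊗ₖ 1) *ᵥ _root_.vecKron (x t) (_root_.vecKronPow (x t) k)
    rw [add_mulVec, kroneckerMap_mulVec_vecKron, kroneckerMap_mulVec_vecKron, one_mulVec,
      one_mulVec, add_comm]

lemma HasDerivAt.tildeXi {n : ℕ} (i : ℕ) {x : ℝ → Fin n → ℝ} {B : Matrix (Fin n) (Fin n) ℝ}
    {t : ℝ} (hx : HasDerivAt x (B *ᵥ x t) t) :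
    HasDerivAt (fun s => tildeXi i (x s)) (tildeA B i *ᵥ tildeXi i (x t)) t := by
  rw [hasDerivAt_pi]
  rintro ⟨k, q⟩
  rw [tildeA, blockDiagonal'_mulVec_apply]
  exact hasDerivAt_pi.1 (hx.vecKronPow k) q

lemma HasDerivAt.dotProduct_mulVec_self {ι : Type*} [Fintype ι] (P M : Matrix ι ι ℝ)
    {ξ : ℝ → ι → ℝ} {t : ℝ} (hξ : HasDerivAt ξ (M *ᵥ ξ t) t) :
    HasDerivAt (fun s => ξ s ⬝ᵥ P *ᵥ ξ s) (ξ t ⬝ᵥ (P * M + Mᵀ * P) *ᵥ ξ t) t := by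
  classical
  have h := ((Matrix.toLinearMap₂' ℝ P).toContinuousBilinearMap.hasDerivWithinAt_of_bilinear
    hξ.hasDerivWithinAt hξ.hasDerivWithinAt (s := Set.univ)).hasDerivAt Filter.univ_mem
  simp only [LinearMap.toContinuousBilinearMap_apply, Matrix.toLinearMap₂'_apply'] at h
  refine h.congr_deriv ?_
  rw [add_mulVec, dotProduct_add, ← mulVec_mulVec, dotProduct_mulVec _ (Mᵀ * P), ← vecMul_vecMul,
    vecMul_transpose, ← dotProduct_mulVec]

theorem stmt12_general {n N : ℕ} (As : Fin N → Matrix (Fin n) (Fin n) ℝ) (i : ℕ)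
    (P : Matrix (tildeIdx n i) (tildeIdx n i) ℝ)
    (hLyap : ∀ j, NegSemidef (P * tildeA (As j) i + (tildeA (As j) i)ᵀ * P))
    (A : ℝ → Matrix (Fin n) (Fin n) ℝ)
    (hA : ∀ t : ℝ, 0 ≤ t → A t ∈ convexHull ℝ (Set.range As))
    (x : ℝ → Fin n → ℝ)
    (hx : ∀ t : ℝ, 0 ≤ t → HasDerivAt x (A t *ᵥ x t) t) :
    AntitoneOn (fun t => tildeXi i (x t) ⬝ᵥ P *ᵥ tildeXi i (x t)) (Set.Ici 0) ∧
    ∀ t : ℝ, 0 ≤ t →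
      x t ∈ {v : Fin n → ℝ |
        tildeXi i v ⬝ᵥ P *ᵥ tildeXi i v ≤ tildeXi i (x 0) ⬝ᵥ P *ᵥ tildeXi i (x 0)} := by
  have hderiv (t : ℝ) (ht : 0 ≤ t) :
      HasDerivAt (fun t => tildeXi i (x t) ⬝ᵥ P *ᵥ tildeXi i (x t))
        (tildeXi i (x t) ⬝ᵥ lyapunovMap i P (A t) *ᵥ tildeXi i (x t)) t :=
    ((hx t ht).tildeXi i).dotProduct_mulVec_self P _
  have hanti : AntitoneOn (fun t => tildeXi i (x t) ⬝ᵥ P *ᵥ tildeXi i (x t)) (Set.Ici 0) := by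
    refine antitoneOn_of_hasDerivWithinAt_nonpos (convex_Ici 0) (f' := fun t =>
      tildeXi i (x t) ⬝ᵥ lyapunovMap i P (A t) *ᵥ tildeXi i (x t))
      (fun t ht => (hderiv t ht).continuousAt.continuousWithinAt) (fun t ht => ?_) fun t ht => ?_
    all_goals rw [interior_Ici] at ht
    · exact (hderiv t ht.le).hasDerivWithinAt
    · exact negSemidef_lyapunovMap_of_mem_convexHull hLyap (hA t ht.le) _
  exact ⟨hanti, fun t ht => hanti Set.self_mem_Ici ht ht⟩

/-- if the symmetric matrix `𝒫_i` satisfies `𝒫_i Ãⁱ(Aⱼ) + Ãⁱ(Aⱼ)ᵀ 𝒫_i ≼ 0` for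
all `j`, `A(t)` evolves in the convex hull of `{A₁, …, A_N}` on `[0,∞)` and `x' = A(t)x`, then
`t ↦ ξ̃_i(x(t))ᵀ 𝒫_i ξ̃_i(x(t))` is nonincreasing on `[0,∞)`; in particular `x(t)` stays in
`𝒳_i = {x : ξ̃_i(x)ᵀ 𝒫_i ξ̃_i(x) ≤ ξ̃_i(x₀)ᵀ 𝒫_i ξ̃_i(x₀)}` for all `t ≥ 0`. -/
theorem stmt12 {n N : ℕ} (As : Fin N → Matrix (Fin n) (Fin n) ℝ) (i : ℕ) (hi : 1 ≤ i)
    (P : Matrix (tildeIdx n i) (tildeIdx n i) ℝ) (hPsymm : P.IsSymm)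
    (hLyap : ∀ j, NegSemidef (P * tildeA (As j) i + (tildeA (As j) i)ᵀ * P))
    (A : ℝ → Matrix (Fin n) (Fin n) ℝ)
    (hA : ∀ t : ℝ, 0 ≤ t → A t ∈ convexHull ℝ (Set.range As))
    (x : ℝ → Fin n → ℝ)
    (hx : ∀ t : ℝ, 0 ≤ t → HasDerivAt x (A t *ᵥ x t) t) :
    AntitoneOn (fun t => tildeXi i (x t) ⬝ᵥ P *ᵥ tildeXi i (x t)) (Set.Ici 0) ∧
    ∀ t : ℝ, 0 ≤ t →
      x t ∈ {v : Fin n → ℝ |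
        tildeXi i v ⬝ᵥ P *ᵥ tildeXi i v ≤ tildeXi i (x 0) ⬝ᵥ P *ᵥ tildeXi i (x 0)} :=
  stmt12_general As i P hLyap A hA x hx
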